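/- arXiv:1806.06996 — 2 statements merged into one kernel-verified Lean document; each statement's English description precedes it below -/
import Mathlib

section
/- Let ‖·‖ be any norm on ℝⁿ. For any ε > 0, there exist an even integer d and a convex positive definite form f of degree d such that max over the unit sphere of |f(x)^{1/d} − ‖x‖| is at most ε. -/
/-!
By Hahn–Banach a norm `N` is the supremum of `|ℓ|` over the linear forms `ℓ` with `|ℓ| ≤ N`,
and each `y` has such an `ℓ` with `ℓ y = N y`. The open cones `{x | (1 - η) N x < ℓ x}` cover the
compact unit sphere, so finitely many forms `ℓ₁, …, ℓₘ` give
`(1 - η) N ≤ max |ℓᵢ| ≤ N`. The `d`-th root of `∑ ℓᵢ ^ d` lies between `max |ℓᵢ|` and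
`m ^ (1 / d) * max |ℓᵢ|`, and `m ^ (1 / d) → 1`; for even `d` the form `∑ ℓᵢ ^ d` is convex.
-/

open Module Set Finset MvPolynomial

section PowerSum

variable {ι : Type*} (s : Finset ι) (a : ι → ℝ) {d : ℕ}

theorem sum_pow_rpow_inv_le_card_rpow_inv_mul (hd : Even d) (hd0 : d ≠ 0) {b : ℝ} (hb : 0 ≤ b)
    (hab : ∀ i ∈ s, |a i| ≤ b) :
    (∑ i ∈ s, a i ^ d) ^ (d⁻¹ : ℝ) ≤ (#s : ℝ) ^ (d⁻¹ : ℝ) * b := by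
  have hsum : ∑ i ∈ s, a i ^ d ≤ #s * b ^ d := by
    rw [← nsmul_eq_mul, ← sum_const]
    refine sum_le_sum fun i hi => ?_
    rw [← hd.pow_abs]
    exact pow_le_pow_left₀ (abs_nonneg _) (hab i hi) d
  calc (∑ i ∈ s, a i ^ d) ^ (d⁻¹ : ℝ) ≤ (#s * b ^ d) ^ (d⁻¹ : ℝ) :=
        Real.rpow_le_rpow (sum_nonneg fun i _ => hd.pow_nonneg _) hsum (by positivity)
    _ = (#s : ℝ) ^ (d⁻¹ : ℝ) * b := by
        rw [Real.mul_rpow (by positivity) (by positivity), Real.pow_rpow_inv_natCast hb hd0]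

theorem abs_le_sum_pow_rpow_inv (hd : Even d) (hd0 : d ≠ 0) {j : ι} (hj : j ∈ s) :
    |a j| ≤ (∑ i ∈ s, a i ^ d) ^ (d⁻¹ : ℝ) := by
  rw [← Real.pow_rpow_inv_natCast (abs_nonneg (a j)) hd0, hd.pow_abs]
  exact Real.rpow_le_rpow (hd.pow_nonneg _)
    (single_le_sum (fun i _ => hd.pow_nonneg (a i)) hj) (by positivity)

end PowerSum

theorem exists_even_natCast_rpow_inv_le (m : ℕ) {c : ℝ} (hc : 1 < c) :
    ∃ d : ℕ, Even d ∧ 0 < d ∧ (m : ℝ) ^ ((d : ℝ)⁻¹) ≤ c := by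
  obtain ⟨k, hk⟩ := pow_unbounded_of_one_lt (m : ℝ) hc
  refine ⟨2 * (k + 1), even_two_mul _, by positivity, ?_⟩
  have hm : (m : ℝ) ≤ c ^ (2 * (k + 1)) :=
    hk.le.trans (pow_le_pow_right₀ hc.le (by omega))
  calc (m : ℝ) ^ ((↑(2 * (k + 1)) : ℝ)⁻¹) ≤ (c ^ (2 * (k + 1))) ^ ((↑(2 * (k + 1)) : ℝ)⁻¹) :=
        Real.rpow_le_rpow m.cast_nonneg hm (by positivity)
    _ = c := Real.pow_rpow_inv_natCast (by positivity) (by positivity)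

theorem convexOn_sum_dual_pow {E : Type*} [AddCommGroup E] [Module ℝ E] (T : Finset (Dual ℝ E))
    {d : ℕ} (hd : Even d) : ConvexOn ℝ univ fun x => ∑ ℓ ∈ T, ℓ x ^ d := by
  rw [← Finset.sum_fn]
  refine Finset.sum_induction _ (ConvexOn ℝ univ) (fun _ _ => ConvexOn.add)
    (convexOn_const 0 convex_univ) fun ℓ _ => ?_
  simpa [Function.comp_def] using hd.convexOn_pow.comp_linearMap ℓ

namespace Seminorm

variable {E : Type*}

theorem exists_dual_apply_self_eq [AddCommGroup E] [Module ℝ E] (p : Seminorm ℝ E) (y : E) :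
    ∃ ℓ : Dual ℝ E, ℓ y = p y ∧ ∀ x, |ℓ x| ≤ p x := by
  have hker : ∀ c : ℝ, c • y = 0 → RingHom.id ℝ c • p y = 0 := fun c hc => by
    have : ‖c‖ * p y = 0 := by rw [← map_smul_eq_mul, hc, map_zero]
    rcases mul_eq_zero.1 this with h | h <;> simp_all
  let f := LinearPMap.mkSpanSingleton' y (p y) hker
  have hf : ∀ x : f.domain, f x ≤ p x := by
    rintro ⟨x, hx⟩
    obtain ⟨c, rfl⟩ := Submodule.mem_span_singleton.1 hx
    rw [LinearPMap.mkSpanSingleton'_apply, map_smul_eq_mul, smul_eq_mul, RingHom.id_apply,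
      Real.norm_eq_abs]
    exact mul_le_mul_of_nonneg_right (le_abs_self c) (apply_nonneg p y)
  obtain ⟨ℓ, hℓf, hℓp⟩ := exists_extension_of_le_sublinear f p
    (fun c hc x => by rw [map_smul_eq_mul, Real.norm_of_nonneg hc.le]) (map_add_le_add p) hf
  refine ⟨ℓ, ?_, p.abs_le_of_le hℓp⟩
  exact (hℓf ⟨y, Submodule.mem_span_singleton_self y⟩).trans
    (LinearPMap.mkSpanSingleton'_apply_self y (p y) hker _)

variable [NormedAddCommGroup E] [NormedSpace ℝ E] [FiniteDimensional ℝ E]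

theorem continuous_of_finiteDimensional (p : Seminorm ℝ E) : Continuous p :=
  continuousOn_univ.1 (p.convexOn.continuousOn isOpen_univ)

theorem exists_finset_dual_lt_apply (p : Seminorm ℝ E) (hp : ∀ x, x ≠ 0 → 0 < p x) {c : ℝ}
    (hc : c < 1) : ∃ T : Finset (Dual ℝ E), (∀ ℓ ∈ T, ∀ x, |ℓ x| ≤ p x) ∧
      ∀ x, x ≠ 0 → ∃ ℓ ∈ T, c * p x < ℓ x := by
  classical
  choose ℓ hℓy hℓp using p.exists_dual_apply_self_eq
  obtain ⟨t, -, hcover⟩ := (isCompact_sphere (0 : E) 1).elim_nhds_subcover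
    (fun y => {x | c * p x < ℓ y x}) fun y hy => by
      refine (isOpen_lt (continuous_const.mul p.continuous_of_finiteDimensional)
        (LinearMap.continuous_of_finiteDimensional _)).mem_nhds ?_
      have : 0 < p y := hp y (ne_zero_of_mem_sphere one_ne_zero ⟨y, hy⟩)
      show c * p y < ℓ y y
      nlinarith [hℓy y]
  refine ⟨t.image ℓ, by simpa using fun y _ => hℓp y, fun x hx => ?_⟩
  have hu : ‖x‖⁻¹ • x ∈ Metric.sphere (0 : E) 1 := by
    simpa using norm_smul_inv_norm (𝕜 := ℝ) hx
  obtain ⟨y, hyt, hy⟩ := mem_iUnion₂.1 (hcover hu)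
  refine ⟨ℓ y, mem_image_of_mem ℓ hyt, ?_⟩
  have hx0 : 0 < ‖x‖⁻¹ := inv_pos.2 (norm_pos_iff.2 hx)
  simp only [mem_ofPred_eq, map_smul_eq_mul, map_smul, smul_eq_mul, Real.norm_eq_abs,
    abs_of_pos hx0] at hy
  nlinarith

theorem exists_sum_dual_pow_rpow_inv_approx (p : Seminorm ℝ E) (hp : ∀ x, x ≠ 0 → 0 < p x)
    {η : ℝ} (hη : 0 < η) : ∃ d : ℕ, Even d ∧ 0 < d ∧ ∃ T : Finset (Dual ℝ E),
      ∀ x, |(∑ ℓ ∈ T, ℓ x ^ d) ^ (d⁻¹ : ℝ) - p x| ≤ η * p x := by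
  obtain ⟨T, hTp, hTlt⟩ := p.exists_finset_dual_lt_apply hp (sub_lt_self 1 hη)
  obtain ⟨d, hd, hd0, hdT⟩ := exists_even_natCast_rpow_inv_le #T (lt_add_of_pos_right 1 hη)
  refine ⟨d, hd, hd0, T, fun x => abs_sub_le_iff.2 ⟨?_, ?_⟩⟩
  · have := sum_pow_rpow_inv_le_card_rpow_inv_mul T (fun ℓ => ℓ x) hd hd0.ne'
      (apply_nonneg p x) fun ℓ hℓ => hTp ℓ hℓ x
    nlinarith [apply_nonneg p x]
  · rcases eq_or_ne x 0 with rfl | hx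
    · simpa using Real.rpow_nonneg (sum_nonneg fun (ℓ : Dual ℝ E) _ => hd.pow_nonneg (ℓ 0)) _
    obtain ⟨ℓ, hℓT, hℓ⟩ := hTlt x hx
    have := abs_le_sum_pow_rpow_inv T (fun ℓ => ℓ x) hd hd0.ne' hℓT
    linarith [le_abs_self (ℓ x)]

theorem exists_sum_dual_pow_rpow_inv_approxOn (p : Seminorm ℝ E) (hp : ∀ x, x ≠ 0 → 0 < p x)
    {K : Set E} (hK : IsCompact K) {ε : ℝ} (hε : 0 < ε) :
    ∃ d : ℕ, Even d ∧ 0 < d ∧ ∃ T : Finset (Dual ℝ E), (∀ x, x ≠ 0 → 0 < ∑ ℓ ∈ T, ℓ x ^ d) ∧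
      ∀ x ∈ K, |(∑ ℓ ∈ T, ℓ x ^ d) ^ (d⁻¹ : ℝ) - p x| ≤ ε := by
  obtain ⟨M, hM⟩ := hK.bddAbove_image p.continuous_of_finiteDimensional.continuousOn
  have hM1 : 0 < |M| + 1 := by positivity
  obtain ⟨d, hd, hd0, T, hT⟩ :=
    p.exists_sum_dual_pow_rpow_inv_approx hp (lt_min one_half_pos (div_pos hε hM1))
  refine ⟨d, hd, hd0, T, fun x hx => ?_, fun x hxK => (hT x).trans ?_⟩
  · have hsum : 0 ≤ ∑ ℓ ∈ T, ℓ x ^ d := sum_nonneg fun ℓ _ => hd.pow_nonneg (ℓ x)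
    refine hsum.lt_of_ne fun h => ?_
    have hroot := (abs_le.1 (hT x)).1
    rw [← h, Real.zero_rpow (by positivity)] at hroot
    nlinarith [min_le_left (1 / 2 : ℝ) (ε / (|M| + 1)), hp x hx]
  · have hpM : p x ≤ |M| + 1 := (hM ⟨x, hxK, rfl⟩).trans ((le_abs_self M).trans (by linarith))
    calc min (1 / 2) (ε / (|M| + 1)) * p x ≤ ε / (|M| + 1) * (|M| + 1) :=
          mul_le_mul (min_le_right _ _) hpM (apply_nonneg p x) (by positivity)
      _ = ε := div_mul_cancel₀ ε hM1.ne'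

end Seminorm

namespace Module.Dual

variable {σ R : Type*} [Fintype σ] [DecidableEq σ] [CommSemiring R]

noncomputable def toMvPolynomial (ℓ : Dual R (σ → R)) : MvPolynomial σ R :=
  ∑ i, C (ℓ (Pi.single i 1)) * X i

@[simp]
theorem eval_toMvPolynomial (ℓ : Dual R (σ → R)) (x : σ → R) :
    MvPolynomial.eval x ℓ.toMvPolynomial = ℓ x := by
  conv_rhs => rw [pi_eq_sum_univ' x]
  simp [toMvPolynomial, mul_comm]

theorem isHomogeneous_toMvPolynomial (ℓ : Dual R (σ → R)) :
    ℓ.toMvPolynomial.IsHomogeneous 1 :=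
  IsHomogeneous.sum _ _ _ fun i _ => isHomogeneous_C_mul_X _ i

end Module.Dual

theorem norm_le_sqrt_sum_sq {ι : Type*} [Fintype ι] (x : ι → ℝ) : ‖x‖ ≤ √(∑ i, x i ^ 2) :=
  (pi_norm_le_iff_of_nonneg (Real.sqrt_nonneg _)).2 fun i =>
    Real.abs_le_sqrt (single_le_sum (fun j _ => sq_nonneg (x j)) (mem_univ i))

/-- Any norm `N` on `ℝⁿ` can be approximated uniformly on the unit sphere by a polynomial
norm: for any `ε > 0` there exist an even integer `d` and a convex positive definite form
`f` of degree `d` with `|f(x)^{1/d} − N x| ≤ ε` for every `x` on the Euclidean unit sphere. -/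
theorem stmt_7 {n : ℕ} (N : (Fin n → ℝ) → ℝ)
    (hN0 : ∀ x : Fin n → ℝ, x ≠ 0 → 0 < N x)
    (hNh : ∀ (c : ℝ) (x : Fin n → ℝ), N (c • x) = |c| * N x)
    (hNt : ∀ x y : Fin n → ℝ, N (x + y) ≤ N x + N y)
    (ε : ℝ) (hε : 0 < ε) :
    ∃ d : ℕ, Even d ∧ 0 < d ∧
      ∃ p : MvPolynomial (Fin n) ℝ, p.IsHomogeneous d ∧
        ConvexOn ℝ Set.univ (fun x : Fin n → ℝ => MvPolynomial.eval x p) ∧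
        (∀ x : Fin n → ℝ, x ≠ 0 → 0 < MvPolynomial.eval x p) ∧
        ∃ g : (Fin n → ℝ) → ℝ,
          (∀ x, g x ^ d = MvPolynomial.eval x p) ∧
          (∀ x, 0 ≤ g x) ∧
          ∀ x : Fin n → ℝ, (∑ i, x i ^ 2) = 1 → |g x - N x| ≤ ε := by
  let p : Seminorm ℝ (Fin n → ℝ) := Seminorm.of N hNt fun c x => by simpa using hNh c x
  obtain ⟨d, hd, hd0, T, hTpos, hTnear⟩ :=
    p.exists_sum_dual_pow_rpow_inv_approxOn hN0 (isCompact_closedBall 0 1) hε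
  let P : MvPolynomial (Fin n) ℝ := ∑ ℓ ∈ T, ℓ.toMvPolynomial ^ d
  have hP : ∀ x, eval x P = ∑ ℓ ∈ T, ℓ x ^ d := fun x => by simp [P]
  have hPnonneg : ∀ x, 0 ≤ eval x P := fun x => by
    simpa only [hP] using sum_nonneg fun (ℓ : Dual ℝ _) _ => hd.pow_nonneg (ℓ x)
  have hPhom : P.IsHomogeneous d := IsHomogeneous.sum _ _ _ fun ℓ _ => by
    simpa using ℓ.isHomogeneous_toMvPolynomial.pow d
  refine ⟨d, hd, hd0, P, hPhom, by simpa only [hP] using convexOn_sum_dual_pow T hd,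
    by simpa only [hP] using hTpos, fun x => eval x P ^ (d⁻¹ : ℝ),
    fun x => Real.rpow_inv_natCast_pow (hPnonneg x) hd0.ne',
    fun x => Real.rpow_nonneg (hPnonneg x) _, fun x hx => ?_⟩
  have hxK : x ∈ Metric.closedBall 0 1 := by
    simpa [hx] using norm_le_sqrt_sum_sq x
  simp only [hP]
  exact hTnear x hxK
end

section
/- Let f : ℝⁿ → ℝ be a form of degree d whose Hessian satisfies yᵀH_f(x)y > 0 for all (x,y) on the bisphere S^{n−1} × S^{n−1}. Let f_min := min over the bisphere of yᵀH_f(x)y and set c := f_min / (2d(d−1)). Then g(x) := f(x) − c(Σᵢ xᵢ²)^{d/2} has positive definite Hessian: yᵀH_g(x)y > 0 for all x ≠ 0, y ≠ 0. -/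
/-!
Write `H_φ(x, y) = yᵀ H_φ(x) y`. For a form `φ` of degree `m`,
`H_φ(s x, t y) = s^(m-2) t² H_φ(x, y)`, so `H_φ` is positive at all `x ≠ 0`, `y ≠ 0` as soon as
it is positive on the bisphere. There, with `N = Σ xᵢ²` and `d = 2k`,
`H_{N^k}(x, y) = 4k(k-1)(x·y)² + 2k|y|² ≤ d(d-1)` by Cauchy–Schwarz, so subtracting `c N^k`
lowers `H_f ≥ f_min` by at most `c d(d-1) = f_min / 2`.
-/

open Finset

namespace MvPolynomial

variable {σ R : Type*} [CommSemiring R]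

theorem IsHomogeneous.eval_smul {φ : MvPolynomial σ R} {m : ℕ} (hφ : φ.IsHomogeneous m)
    (t : R) (x : σ → R) : eval (t • x) φ = t ^ m * eval x φ := by
  rw [eval_eq, eval_eq, mul_sum]
  refine sum_congr rfl fun u hu => ?_
  simp only [Pi.smul_apply, smul_eq_mul, mul_pow, prod_mul_distrib, prod_pow_eq_pow_sum,
    ← hφ.degree_eq_sum_deg_support hu]
  ring

variable [Fintype σ]

noncomputable def dirDeriv (y : σ → R) : Derivation R (MvPolynomial σ R) (MvPolynomial σ R) :=
  ∑ i, y i • pderiv i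

theorem dirDeriv_apply (y : σ → R) (φ : MvPolynomial σ R) :
    dirDeriv y φ = ∑ i, y i • pderiv i φ := by
  rw [dirDeriv, ← Derivation.coeFnAddMonoidHom_apply, map_sum, Finset.sum_apply]
  rfl

theorem dirDeriv_smul (t : R) (y : σ → R) : dirDeriv (t • y) = t • dirDeriv y := by
  simp only [dirDeriv, Pi.smul_apply, smul_sum, smul_smul, smul_eq_mul]

theorem dirDeriv_X (y : σ → R) (i : σ) : dirDeriv y (X i) = C (y i) := by
  classical
  simp [dirDeriv_apply, pderiv_X, Pi.single_apply, C_eq_smul_one]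

protected theorem IsHomogeneous.dirDeriv {φ : MvPolynomial σ R} {m : ℕ} (hφ : φ.IsHomogeneous m)
    (y : σ → R) : (dirDeriv y φ).IsHomogeneous (m - 1) := by
  rw [dirDeriv_apply]
  exact IsHomogeneous.sum _ _ _ fun i _ => (homogeneousSubmodule σ R _).smul_mem _ hφ.pderiv

theorem IsHomogeneous.eval_dirDeriv_dirDeriv_smul {φ : MvPolynomial σ R} {m : ℕ}
    (hφ : φ.IsHomogeneous m) (s t : R) (x y : σ → R) :
    eval (s • x) (dirDeriv (t • y) (dirDeriv (t • y) φ))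
      = s ^ (m - 2) * t ^ 2 * eval x (dirDeriv y (dirDeriv y φ)) := by
  have hφ₂ : (dirDeriv y (dirDeriv y φ)).IsHomogeneous (m - 2) := (hφ.dirDeriv y).dirDeriv y
  simp only [dirDeriv_smul, Derivation.smul_apply, Derivation.map_smul, smul_eval,
    hφ₂.eval_smul]
  ring

noncomputable def sumSq : MvPolynomial σ R := ∑ i, X i ^ 2

theorem eval_sumSq (x : σ → R) : eval x sumSq = ∑ i, x i ^ 2 := by
  simp [sumSq]

theorem isHomogeneous_sumSq : (sumSq : MvPolynomial σ R).IsHomogeneous 2 :=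
  IsHomogeneous.sum _ _ _ fun i _ => isHomogeneous_X_pow i 2

theorem dirDeriv_sumSq (y : σ → R) : dirDeriv y sumSq = ∑ i, (2 * y i) • X i := by
  simp only [sumSq, map_sum, Derivation.leibniz_pow, dirDeriv_X, nsmul_eq_mul, smul_eq_mul,
    Nat.cast_ofNat]
  refine sum_congr rfl fun i _ => ?_
  rw [smul_eq_C_mul, C_mul, map_ofNat]
  ring

theorem eval_dirDeriv_sumSq (x y : σ → R) :
    eval x (dirDeriv y sumSq) = 2 * ∑ i, x i * y i := by
  simp only [dirDeriv_sumSq, map_sum, smul_eval, eval_X, mul_sum]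
  exact sum_congr rfl fun i _ => by ring

theorem eval_dirDeriv_dirDeriv_sumSq (x y : σ → R) :
    eval x (dirDeriv y (dirDeriv y sumSq)) = 2 * ∑ i, y i ^ 2 := by
  simp only [dirDeriv_sumSq, map_sum, Derivation.map_smul, dirDeriv_X, smul_eval, eval_C, mul_sum]
  exact sum_congr rfl fun i _ => by ring

theorem eval_dirDeriv_dirDeriv_sumSq_pow {x : σ → R} (hx : ∑ i, x i ^ 2 = 1) (y : σ → R)
    (k : ℕ) : eval x (dirDeriv y (dirDeriv y (sumSq ^ k)))
      = 4 * k * (k - 1 : ℕ) * (∑ i, x i * y i) ^ 2 + 2 * k * ∑ i, y i ^ 2 := by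
  have hN : eval x sumSq = 1 := by rw [eval_sumSq, hx]
  simp only [Derivation.leibniz_pow, map_nsmul, Derivation.leibniz, smul_eq_mul]
  simp only [nsmul_eq_mul, eval_mul, eval_add, eval_pow, map_natCast, hN, one_pow,
    eval_dirDeriv_sumSq, eval_dirDeriv_dirDeriv_sumSq]
  ring

section Real

theorem hasFDerivAt_eval (φ : MvPolynomial σ ℝ) (x : σ → ℝ) :
    HasFDerivAt (fun z => eval z φ)
      (∑ i, eval x (pderiv i φ) • ContinuousLinearMap.proj (R := ℝ) (φ := fun _ : σ => ℝ) i) x := by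
  induction φ using MvPolynomial.induction_on with
  | C a => simpa using hasFDerivAt_const a x
  | add p q hp hq =>
    simp only [map_add, add_smul, sum_add_distrib]
    exact hp.add hq
  | mul_X p i hp =>
    classical
    simp only [eval_mul, eval_X]
    refine (hp.mul (hasFDerivAt_apply i x)).congr_fderiv ?_
    ext y
    simp [pderiv_X, Pi.single_apply, add_mul, sum_add_distrib, mul_sum, apply_ite (eval x),
      ite_mul, mul_assoc]

theorem fderiv_eval_apply (φ : MvPolynomial σ ℝ) (x y : σ → ℝ) :
    fderiv ℝ (fun z => eval z φ) x y = eval x (dirDeriv y φ) := by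
  simp [(hasFDerivAt_eval φ x).fderiv, dirDeriv_apply, mul_comm]

theorem fderiv_fderiv_eval_apply (φ : MvPolynomial σ ℝ) (x y : σ → ℝ) :
    fderiv ℝ (fun z => fderiv ℝ (fun w => eval w φ) z y) x y
      = eval x (dirDeriv y (dirDeriv y φ)) := by
  simp only [fderiv_eval_apply]

variable {φ : MvPolynomial σ ℝ}

theorem eval_dirDeriv_dirDeriv_sumSq_pow_le {x y : σ → ℝ} (hx : ∑ i, x i ^ 2 = 1)
    (hy : ∑ i, y i ^ 2 = 1) {k : ℕ} (hk : 1 ≤ k) :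
    eval x (dirDeriv y (dirDeriv y (sumSq ^ k))) ≤ 2 * k * (2 * k - 1) := by
  have hCS : (∑ i, x i * y i) ^ 2 ≤ 1 := by
    simpa [hx, hy] using sum_mul_sq_le_sq_mul_sq univ x y
  have hk' : (1 : ℝ) ≤ k := by exact_mod_cast hk
  have hcoeff : 0 ≤ 4 * (k : ℝ) * (k - 1) := by nlinarith
  rw [eval_dirDeriv_dirDeriv_sumSq_pow hx, hy, Nat.cast_sub hk, Nat.cast_one]
  nlinarith [mul_le_mul_of_nonneg_left hCS hcoeff]

theorem exists_eq_smul_of_ne_zero {x : σ → ℝ} (hx : x ≠ 0) :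
    ∃ s : ℝ, 0 < s ∧ ∃ u : σ → ℝ, ∑ i, u i ^ 2 = 1 ∧ x = s • u := by
  obtain ⟨j, hj⟩ := Function.ne_iff.mp hx
  have hpos : 0 < ∑ i, x i ^ 2 :=
    sum_pos' (fun i _ => sq_nonneg _) ⟨j, mem_univ j, sq_pos_of_ne_zero hj⟩
  set s := √(∑ i, x i ^ 2)
  have hs : 0 < s := Real.sqrt_pos.mpr hpos
  refine ⟨s, hs, s⁻¹ • x, ?_, (smul_inv_smul₀ hs.ne' x).symm⟩
  simp only [Pi.smul_apply, smul_eq_mul, mul_pow, ← mul_sum, inv_pow,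
    Real.sq_sqrt hpos.le, s]
  exact inv_mul_cancel₀ hpos.ne'

theorem IsHomogeneous.eval_dirDeriv_dirDeriv_pos {m : ℕ} (hφ : φ.IsHomogeneous m)
    (h : ∀ u v : σ → ℝ, ∑ i, u i ^ 2 = 1 → ∑ i, v i ^ 2 = 1 →
      0 < eval u (dirDeriv v (dirDeriv v φ)))
    {x y : σ → ℝ} (hx : x ≠ 0) (hy : y ≠ 0) : 0 < eval x (dirDeriv y (dirDeriv y φ)) := by
  obtain ⟨s, hs, u, hu, rfl⟩ := exists_eq_smul_of_ne_zero hx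
  obtain ⟨t, ht, v, hv, rfl⟩ := exists_eq_smul_of_ne_zero hy
  rw [hφ.eval_dirDeriv_dirDeriv_smul]
  have := h u v hu hv
  positivity

theorem eval_dirDeriv_dirDeriv_sub_smul_sumSq_pow_pos {m : ℝ} (hm : 0 < m) {k : ℕ} (hk : 1 ≤ k)
    (hφ : ∀ u v : σ → ℝ, ∑ i, u i ^ 2 = 1 → ∑ i, v i ^ 2 = 1 →
      m ≤ eval u (dirDeriv v (dirDeriv v φ)))
    {u v : σ → ℝ} (hu : ∑ i, u i ^ 2 = 1) (hv : ∑ i, v i ^ 2 = 1) :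
    0 < eval u (dirDeriv v (dirDeriv v (φ - (m / (2 * (2 * k) * (2 * k - 1))) • sumSq ^ k))) := by
  have hk' : (1 : ℝ) ≤ k := by exact_mod_cast hk
  have hc : m / (2 * (2 * k) * (2 * k - 1)) * (2 * k * (2 * k - 1)) = m / 2 := by
    have : (2 * k - 1 : ℝ) ≠ 0 := by linarith
    field_simp
  have hc_nonneg : 0 ≤ m / (2 * (2 * k) * (2 * k - 1)) := div_nonneg hm.le (by nlinarith)
  have hN := mul_le_mul_of_nonneg_left (eval_dirDeriv_dirDeriv_sumSq_pow_le hu hv hk) hc_nonneg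
  simp only [map_sub, Derivation.map_smul, smul_eval]
  linarith [hφ u v hu hv]

end Real

end MvPolynomial

open MvPolynomial in
/-- Let `f` be a form of even degree `d ≥ 2` whose Hessian quadratic form `yᵀH_f(x)y` is
positive on the bisphere, with minimum value `fmin` there. With `c := fmin/(2d(d−1))`, the
form `g(x) := f(x) − c·(Σᵢ xᵢ²)^{d/2}` has positive definite Hessian:
`yᵀH_g(x)y > 0` for all `x ≠ 0`, `y ≠ 0`. -/
theorem stmt_11 {n d : ℕ} (hd2 : 2 ≤ d) (hde : Even d)
    (p : MvPolynomial (Fin n) ℝ) (hp : p.IsHomogeneous d)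
    (f : (Fin n → ℝ) → ℝ) (hf : f = fun x => MvPolynomial.eval x p)
    (hpos : ∀ x y : Fin n → ℝ, (∑ i, x i ^ 2) = 1 → (∑ i, y i ^ 2) = 1 →
      0 < fderiv ℝ (fun z => fderiv ℝ f z y) x y)
    (fmin : ℝ)
    (hfmin : IsLeast {v : ℝ | ∃ x y : Fin n → ℝ, (∑ i, x i ^ 2) = 1 ∧ (∑ i, y i ^ 2) = 1 ∧
      v = fderiv ℝ (fun z => fderiv ℝ f z y) x y} fmin)
    (g : (Fin n → ℝ) → ℝ)
    (hg : g = fun x => f x - (fmin / (2 * (d : ℝ) * ((d : ℝ) - 1))) * (∑ i, x i ^ 2) ^ (d / 2)) :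
    ∀ x : Fin n → ℝ, x ≠ 0 → ∀ y : Fin n → ℝ, y ≠ 0 →
      0 < fderiv ℝ (fun z => fderiv ℝ g z y) x y := by
  obtain ⟨k, rfl⟩ := hde
  have hd : ((k + k : ℕ) : ℝ) = 2 * k := by push_cast; ring
  set P := p - (fmin / (2 * (2 * k) * (2 * k - 1))) • sumSq ^ k
  have hgP : g = fun z => eval z P := by
    simp only [hg, hf, hd, P, eval_sub, smul_eval, eval_pow, eval_sumSq,
      show (k + k) / 2 = k by omega]
  have hP : P.IsHomogeneous (k + k) := by
    refine hp.sub ((homogeneousSubmodule _ _ _).smul_mem _ ?_)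
    simpa only [two_mul, mem_homogeneousSubmodule] using isHomogeneous_sumSq.pow k
  have hfmin_pos : 0 < fmin := by
    obtain ⟨u, v, hu, hv, rfl⟩ := hfmin.1
    exact hpos u v hu hv
  have hp_ge : ∀ u v : Fin n → ℝ, ∑ i, u i ^ 2 = 1 → ∑ i, v i ^ 2 = 1 →
      fmin ≤ eval u (dirDeriv v (dirDeriv v p)) := fun u v hu hv =>
    hfmin.2 ⟨u, v, hu, hv, by rw [hf, fderiv_fderiv_eval_apply]⟩
  intro x hx y hy
  rw [hgP, fderiv_fderiv_eval_apply]
  exact hP.eval_dirDeriv_dirDeriv_pos (fun u v hu hv =>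
    eval_dirDeriv_dirDeriv_sub_smul_sumSq_pow_pos hfmin_pos (by omega) hp_ge hu hv) hx hy
end
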